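/- In any potentially infinite model, addition is possibly total on natural numbers: at every world w, for all x, y with ℕ x and ℕ y at w, there exists a world s with R(w,s) and a z ∈ D(s) with ℕ z at s such that +(x,y,z) holds at s. -/
import Mathlib


/-- The rigid cardinality ("octothorpe") operator: #X = a(|X|). -/
def octo (a : ℕ → ℕ) (X : Finset ℕ) : ℕ := a X.card

/-- A potentially infinite (PI) model: a countably infinite set of worlds `W`,
a directed partial order `R`, nonempty finite domains strictly increasing along `R`,
and an injection `a : ℕ → ⋃ D` implementing the rigid cardinality operator. -/
def IsPIModel {W : Type} (R : W → W → Prop) (D : W → Finset ℕ) (a : ℕ → ℕ) : Prop :=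
  Countable W ∧ Infinite W ∧
  (∀ w, R w w) ∧ (∀ w s t, R w s → R s t → R w t) ∧ (∀ w s, R w s → R s w → w = s) ∧
  (∀ w s : W, ∃ t, R w t ∧ R s t) ∧
  (∀ w, (D w).Nonempty) ∧
  (∀ w s, R w s → w ≠ s → D w ⊂ D s) ∧
  Function.Injective a ∧
  (∀ n, ∃ w, a n ∈ D w)

/-- S x y ≡ ◇∃G ∃u (u ∈ G ∧ y = #G ∧ x = #(G \ {u})). -/
def Succ {W : Type} (R : W → W → Prop) (D : W → Finset ℕ) (a : ℕ → ℕ)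
    (w : W) (x y : ℕ) : Prop :=
  ∃ s, R w s ∧ ∃ G : Finset ℕ, G ⊆ D s ∧ ∃ u ∈ G, y = octo a G ∧ x = octo a (G.erase u)

/-- S' x y ≡ ◇∃F ∃u (u ∉ F ∧ x = #F ∧ y = #(F ∪ {u})). -/
def Succ' {W : Type} (R : W → W → Prop) (D : W → Finset ℕ) (a : ℕ → ℕ)
    (w : W) (x y : ℕ) : Prop :=
  ∃ s, R w s ∧ ∃ F : Finset ℕ, F ⊆ D s ∧ ∃ u ∈ D s, u ∉ F ∧
    x = octo a F ∧ y = octo a (insert u F)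

/-- The strong ancestral S⁺ of the successor relation at world `w`,
with second-order quantification over all subsets of `D w`. -/
def SAnc {W : Type} (R : W → W → Prop) (D : W → Finset ℕ) (a : ℕ → ℕ)
    (w : W) (b c : ℕ) : Prop :=
  ∀ X : Finset ℕ, X ⊆ D w →
    (∀ x ∈ D w, ∀ y ∈ D w, x ∈ X → Succ R D a w x y → y ∈ X) →
    (∀ x ∈ D w, Succ R D a w b x → x ∈ X) → c ∈ X

/-- The weak (reflexive) ancestral S⁺⁼. -/
def SAncW {W : Type} (R : W → W → Prop) (D : W → Finset ℕ) (a : ℕ → ℕ)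
    (w : W) (b c : ℕ) : Prop :=
  SAnc R D a w b c ∨ b = c

/-- ℕ x at w ≡ S⁺⁼(0,x) ∧ 0 exists at w, where 0 = #∅. -/
def NatNum {W : Type} (R : W → W → Prop) (D : W → Finset ℕ) (a : ℕ → ℕ)
    (w : W) (x : ℕ) : Prop :=
  SAncW R D a w (octo a ∅) x ∧ octo a ∅ ∈ D w

/-- +(x,y,z) ≡ ◇∃X ∃Y (x = #X ∧ y = #Y ∧ z = #(X ∪ Y) ∧ X ∩ Y = ∅). -/
def AddRel {W : Type} (R : W → W → Prop) (D : W → Finset ℕ) (a : ℕ → ℕ)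
    (w : W) (x y z : ℕ) : Prop :=
  ∃ s, R w s ∧ ∃ X Y : Finset ℕ, X ⊆ D s ∧ Y ⊆ D s ∧
    x = octo a X ∧ y = octo a Y ∧ z = octo a (X ∪ Y) ∧ X ∩ Y = ∅

/-- ×(x,y,z) ≡ ◇∃X ∃P [#X = y ∧ each row of P over X has cardinality x ∧
rows are pairwise disjoint ∧ #(union of the rows) = z]. -/
def MulRel {W : Type} (R : W → W → Prop) (D : W → Finset ℕ) (a : ℕ → ℕ)
    (w : W) (x y z : ℕ) : Prop :=
  ∃ s, R w s ∧ ∃ X : Finset ℕ, X ⊆ D s ∧ ∃ P : Finset (ℕ × ℕ), P ⊆ (D s) ×ˢ (D s) ∧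
    octo a X = y ∧
    (∀ u ∈ X, octo a ((P.filter (fun p => p.1 = u)).image Prod.snd) = x) ∧
    (∀ u ∈ X, ∀ v ∈ X, u ≠ v →
      ((P.filter (fun p => p.1 = u)).image Prod.snd) ∩
        ((P.filter (fun p => p.1 = v)).image Prod.snd) = ∅) ∧
    octo a (X.biUnion (fun u => (P.filter (fun p => p.1 = u)).image Prod.snd)) = z

section Aux

variable {W : Type} {R : W → W → Prop} {D : W → Finset ℕ} {a : ℕ → ℕ}

lemma pi_mono (hM : IsPIModel R D a) {u v : W} (h : R u v) : D u ⊆ D v := by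
  by_cases huv : u = v
  · subst huv; exact subset_rfl
  · exact (hM.2.2.2.2.2.2.2.1 u v h huv).subset

lemma pi_exists_world (hM : IsPIModel R D a) (w : W) (k : ℕ) :
    ∃ s, R w s ∧ ∀ j ≤ k, a j ∈ D s := by
  induction k with
  | zero =>
    obtain ⟨w0, hw0⟩ := hM.2.2.2.2.2.2.2.2.2 0
    obtain ⟨t, hwt, hw0t⟩ := hM.2.2.2.2.2.1 w w0
    refine ⟨t, hwt, fun j hj => ?_⟩
    have : j = 0 := Nat.le_zero.mp hj
    subst this
    exact pi_mono hM hw0t hw0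
  | succ k ih =>
    obtain ⟨s, hws, hs⟩ := ih
    obtain ⟨w0, hw0⟩ := hM.2.2.2.2.2.2.2.2.2 (k+1)
    obtain ⟨t, hst, hw0t⟩ := hM.2.2.2.2.2.1 s w0
    refine ⟨t, hM.2.2.2.1 w s t hws hst, fun j hj => ?_⟩
    rcases Nat.lt_or_ge j (k+1) with h | h
    · exact pi_mono hM hst (hs j (Nat.lt_succ_iff.mp h))
    · have : j = k+1 := le_antisymm hj h
      subst this
      exact pi_mono hM hw0t hw0

lemma pi_succ (hM : IsPIModel R D a) (w : W) (m : ℕ) :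
    Succ R D a w (a m) (a (m+1)) := by
  obtain ⟨s, hws, hs⟩ := pi_exists_world hM w (m+1)
  have hinj : Function.Injective a := hM.2.2.2.2.2.2.2.2.1
  refine ⟨s, hws, (Finset.range (m+1)).image a, ?_, a 0, ?_, ?_, ?_⟩
  · intro v hv
    simp only [Finset.mem_image, Finset.mem_range] at hv
    obtain ⟨j, hj, rfl⟩ := hv
    exact hs j (by omega)
  · exact Finset.mem_image_of_mem a (by simp)
  · unfold octo
    rw [Finset.card_image_of_injective _ hinj, Finset.card_range]
  · unfold octo
    rw [Finset.card_erase_of_mem (Finset.mem_image_of_mem a (by simp)),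
      Finset.card_image_of_injective _ hinj, Finset.card_range]
    congr 1

lemma pi_succ_inv {w : W} {x y : ℕ} (hS : Succ R D a w x y) :
    ∃ m, x = a m ∧ y = a (m+1) := by
  obtain ⟨s, _, G, _, u, hu, hy, hx⟩ := hS
  refine ⟨(G.erase u).card, hx, ?_⟩
  rw [hy]
  unfold octo
  congr 1
  rw [Finset.card_erase_of_mem hu]
  have : 0 < G.card := Finset.card_pos.mpr ⟨u, hu⟩
  omega

lemma pi_sanc_of_seg (hM : IsPIModel R D a) (w : W) (k : ℕ) (hk : 1 ≤ k)
    (hseg : ∀ j, 1 ≤ j → j ≤ k → a j ∈ D w) :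
    SAnc R D a w (a 0) (a k) := by
  intro X hX hcl hbase
  have key : ∀ j, 1 ≤ j → j ≤ k → a j ∈ X := by
    intro j
    induction j with
    | zero => omega
    | succ i ih =>
      intro _ hjk
      rcases Nat.eq_zero_or_pos i with h0 | hpos
      · subst h0
        exact hbase (a 1) (hseg 1 le_rfl hjk) (pi_succ hM w 0)
      · exact hcl (a i) (hseg i hpos (by omega)) (a (i+1)) (hseg (i+1) (by omega) hjk)
          (ih hpos (by omega)) (pi_succ hM w i)
  exact key k hk le_rfl

lemma pi_sanc_inv (hM : IsPIModel R D a) {w : W} {c : ℕ}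
    (h : SAnc R D a w (a 0) c) :
    ∃ k, 1 ≤ k ∧ c = a k ∧ ∀ j, 1 ≤ j → j ≤ k → a j ∈ D w := by
  classical
  have hinj : Function.Injective a := hM.2.2.2.2.2.2.2.2.1
  set X := (D w).filter
    (fun c => ∃ k, 1 ≤ k ∧ c = a k ∧ ∀ j, 1 ≤ j → j ≤ k → a j ∈ D w) with hXdef
  have hmem := h X (Finset.filter_subset _ _) ?_ ?_
  · exact (Finset.mem_filter.mp hmem).2
  · intro x _ y hyD hxX hS
    obtain ⟨m, hxm, hym⟩ := pi_succ_inv hS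
    obtain ⟨k, hk1, hxk, hseg⟩ := (Finset.mem_filter.mp hxX).2
    have hmk : m = k := hinj (hxm ▸ hxk)
    subst hmk
    refine Finset.mem_filter.mpr ⟨hyD, m+1, by omega, hym, fun j hj1 hj2 => ?_⟩
    rcases Nat.lt_or_ge j (m+1) with h' | h'
    · exact hseg j hj1 (by omega)
    · have : j = m+1 := by omega
      subst this
      exact hym ▸ hyD
  · intro x hxD hS
    obtain ⟨m, h0m, hxm⟩ := pi_succ_inv hS
    have hm0 : m = 0 := (hinj h0m).symm
    subst hm0
    refine Finset.mem_filter.mpr ⟨hxD, 1, le_rfl, hxm, fun j hj1 hj2 => ?_⟩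
    have : j = 1 := by omega
    subst this
    exact hxm ▸ hxD

lemma octo_empty (a : ℕ → ℕ) : octo a ∅ = a 0 := by simp [octo]

lemma pi_natnum_inv (hM : IsPIModel R D a) {w : W} {x : ℕ}
    (h : NatNum R D a w x) : ∃ k, x = a k ∧ ∀ j ≤ k, a j ∈ D w := by
  obtain ⟨hS, h0⟩ := h
  rw [octo_empty] at hS h0
  rcases hS with hS | rfl
  · obtain ⟨k, _, rfl, hseg⟩ := pi_sanc_inv hM hS
    refine ⟨k, rfl, fun j hj => ?_⟩
    rcases Nat.eq_zero_or_pos j with h' | h'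
    · subst h'; exact h0
    · exact hseg j h' hj
  · exact ⟨0, rfl, fun j hj => by have : j = 0 := Nat.le_zero.mp hj; subst this; exact h0⟩

lemma pi_natnum_of (hM : IsPIModel R D a) {w : W} {k : ℕ}
    (hseg : ∀ j ≤ k, a j ∈ D w) : NatNum R D a w (a k) := by
  constructor
  · rw [octo_empty]
    rcases Nat.eq_zero_or_pos k with h' | h'
    · subst h'; exact Or.inr rfl
    · exact Or.inl (pi_sanc_of_seg hM w k h' (fun j _ hj => hseg j hj))
  · rw [octo_empty]; exact hseg 0 (Nat.zero_le k)

end Aux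


/-- Addition is possibly total on the natural numbers. -/
theorem stmt12 {W : Type} (R : W → W → Prop) (D : W → Finset ℕ) (a : ℕ → ℕ)
    (hM : IsPIModel R D a) (w : W) (x y : ℕ)
    (hx : NatNum R D a w x) (hy : NatNum R D a w y) :
    ∃ s, R w s ∧ ∃ z ∈ D s, NatNum R D a s z ∧ AddRel R D a s x y z := by
  have hinj : Function.Injective a := hM.2.2.2.2.2.2.2.2.1
  obtain ⟨m, rfl, hmseg⟩ := pi_natnum_inv hM hx
  obtain ⟨n, rfl, hnseg⟩ := pi_natnum_inv hM hy
  obtain ⟨s, hws, hs⟩ := pi_exists_world hM w (m+n)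
  refine ⟨s, hws, a (m+n), hs (m+n) le_rfl, pi_natnum_of hM hs, ?_⟩
  refine ⟨s, hM.2.2.1 s, (Finset.range m).image a, (Finset.Ico m (m+n)).image a,
    ?_, ?_, ?_, ?_, ?_, ?_⟩
  · intro v hv
    simp only [Finset.mem_image, Finset.mem_range] at hv
    obtain ⟨j, hj, rfl⟩ := hv
    exact hs j (by omega)
  · intro v hv
    simp only [Finset.mem_image, Finset.mem_Ico] at hv
    obtain ⟨j, hj, rfl⟩ := hv
    exact hs j (by omega)
  · unfold octo
    rw [Finset.card_image_of_injective _ hinj, Finset.card_range]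
  · unfold octo
    rw [Finset.card_image_of_injective _ hinj, Nat.card_Ico]
    congr 1
    omega
  · unfold octo
    rw [← Finset.image_union, Finset.range_eq_Ico,
      Finset.Ico_union_Ico_eq_Ico (Nat.zero_le m) (Nat.le_add_right m n),
      Finset.card_image_of_injective _ hinj, Nat.card_Ico, Nat.sub_zero]
  · rw [← Finset.image_inter _ _ hinj]
    convert Finset.image_empty a
    ext j
    simp only [Finset.mem_inter, Finset.mem_range, Finset.mem_Ico, Finset.notMem_empty,
      iff_false]
    omega
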